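/- arXiv:1810.01478 — 3 statements merged into one kernel-verified Lean document; each statement's English description precedes it below -/
import Mathlib

section
/- For every real β > 0, the last term dominates the trace sum asymptotically: lim_{N→∞} [Σ_{k=0}^{N−1} Γ((2k+1)/β)] / Γ((2N−1)/β) = 1. -/
/-! With `x_k = (2k+1)/β` the summands are `a_k = Γ(x_k)` and `x_{k+1} = x_k + 2/β`.
Log-convexity of `Γ` gives `Γ(x + c) ≥ Γ(x) (x - 1)^c`, so `a_k / a_{k+1} → 0`. The normalised
partial sums `T_n = (∑_{k<n} a_k) / a_n` satisfy `T_{n+1} = (T_n + 1) a_n / a_{n+1}`: once the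
ratios are below `1/2` this keeps `T_n` bounded, and then the same recursion forces `T_n → 0`. -/

open Filter Topology Finset

namespace Real

theorem Gamma_mul_rpow_le_Gamma_add {x c : ℝ} (hx : 1 < x) (hc : 0 < c) :
    Gamma x * (x - 1) ^ c ≤ Gamma (x + c) := by
  have hx1 : 0 < x - 1 := by linarith
  have hlogΓ : log (Gamma x) = log (x - 1) + log (Gamma (x - 1)) := by
    rw [← log_mul hx1.ne' (Gamma_pos_of_pos hx1).ne', ← Gamma_add_one hx1.ne', sub_add_cancel]
  have hslope := (convexOn_iff_slope_mono_adjacent.mp convexOn_log_Gamma).2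
    (Set.mem_Ioi.mpr hx1) (Set.mem_Ioi.mpr (by linarith : 0 < x + c))
    (by linarith : x - 1 < x) (by linarith : x < x + c)
  simp only [Function.comp_apply] at hslope
  rw [sub_sub_cancel, div_one, add_sub_cancel_left, hlogΓ, add_sub_cancel_right,
    le_div_iff₀ hc] at hslope
  have hΓ := Gamma_pos_of_pos (by linarith : 0 < x)
  rw [← log_le_log_iff (by positivity) (Gamma_pos_of_pos (by linarith)),
    log_mul hΓ.ne' (by positivity), log_rpow hx1]
  linarith

theorem tendsto_Gamma_div_Gamma_add_atTop {c : ℝ} (hc : 0 < c) :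
    Tendsto (fun x => Gamma x / Gamma (x + c)) atTop (𝓝 0) := by
  have hbound : Tendsto (fun x : ℝ => (x - 1) ^ (-c)) atTop (𝓝 0) :=
    (tendsto_rpow_neg_atTop hc).comp (tendsto_atTop_add_const_right _ (-1) tendsto_id)
  refine tendsto_of_tendsto_of_tendsto_of_le_of_le' tendsto_const_nhds hbound ?_ ?_
  · filter_upwards [eventually_gt_atTop 0] with x hx
    exact div_nonneg (Gamma_pos_of_pos hx).le (Gamma_pos_of_pos (by linarith)).le
  · filter_upwards [eventually_gt_atTop 1] with x hx
    have hΓ := Gamma_pos_of_pos (by linarith : 0 < x)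
    rw [div_le_iff₀ (Gamma_pos_of_pos (by linarith)), rpow_neg (by linarith), inv_mul_eq_div,
      le_div_iff₀ (by positivity)]
    exact Gamma_mul_rpow_le_Gamma_add hx hc

end Real

section RatioRecursion

variable {T r : ℕ → ℝ}

theorem exists_eventually_le_of_succ_eq_add_one_mul (hr0 : ∀ n, 0 ≤ r n)
    (hr : Tendsto r atTop (𝓝 0)) (hrec : ∀ n, T (n + 1) = (T n + 1) * r n) :
    ∃ B, ∀ᶠ n in atTop, T n ≤ B := by
  obtain ⟨M, hM⟩ :=
    eventually_atTop.mp (hr.eventually (ge_mem_nhds (by norm_num : (0 : ℝ) < 1 / 2)))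
  refine ⟨max (T M) 1, eventually_atTop.mpr ⟨M, fun n hn => ?_⟩⟩
  induction n, hn using Nat.le_induction with
  | base => exact le_max_left _ _
  | succ n hn ih =>
    calc T (n + 1) = (T n + 1) * r n := hrec n
      _ ≤ (max (T M) 1 + 1) * (1 / 2) :=
        mul_le_mul (by linarith) (hM n hn) (hr0 n) (by positivity)
      _ ≤ max (T M) 1 := by linarith [le_max_right (T M) 1]

theorem tendsto_zero_of_succ_eq_add_one_mul (hT : ∀ n, 0 ≤ T n) (hr0 : ∀ n, 0 ≤ r n)
    (hr : Tendsto r atTop (𝓝 0)) (hrec : ∀ n, T (n + 1) = (T n + 1) * r n) :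
    Tendsto T atTop (𝓝 0) := by
  obtain ⟨B, hB⟩ := exists_eventually_le_of_succ_eq_add_one_mul hr0 hr hrec
  rw [← tendsto_add_atTop_iff_nat 1]
  have hbound : Tendsto (fun n => (B + 1) * r n) atTop (𝓝 0) := by
    simpa using hr.const_mul (B + 1)
  refine tendsto_of_tendsto_of_tendsto_of_le_of_le' tendsto_const_nhds hbound
    (Eventually.of_forall fun n => hT (n + 1)) ?_
  filter_upwards [hB] with n hn
  rw [hrec]
  exact mul_le_mul_of_nonneg_right (by linarith) (hr0 n)

end RatioRecursion

theorem tendsto_sum_range_div_of_tendsto_div_succ {a : ℕ → ℝ} (ha : ∀ n, 0 < a n)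
    (hr : Tendsto (fun n => a n / a (n + 1)) atTop (𝓝 0)) :
    Tendsto (fun n => (∑ k ∈ range n, a k) / a n) atTop (𝓝 0) := by
  refine tendsto_zero_of_succ_eq_add_one_mul
    (fun n => div_nonneg (sum_nonneg fun k _ => (ha k).le) (ha n).le)
    (fun n => div_nonneg (ha n).le (ha (n + 1)).le) hr fun n => ?_
  rw [sum_range_succ]
  field_simp [(ha n).ne', (ha (n + 1)).ne']

/-- For every real β > 0, the last term dominates the trace sum asymptotically:
lim_{N→∞} [Σ_{k=0}^{N−1} Γ((2k+1)/β)] / Γ((2N−1)/β) = 1. -/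
theorem gamma_sum_div_last_tendsto_one (β : ℝ) (hβ : 0 < β) :
    Tendsto (fun N : ℕ =>
        (∑ k ∈ Finset.range N, Real.Gamma ((2 * (k : ℝ) + 1) / β)) /
          Real.Gamma ((2 * (N : ℝ) - 1) / β))
      atTop (nhds 1) := by
  set a : ℕ → ℝ := fun k => Real.Gamma ((2 * (k : ℝ) + 1) / β)
  have ha : ∀ k, 0 < a k := fun k => Real.Gamma_pos_of_pos (by positivity)
  have hx : Tendsto (fun k : ℕ => (2 * (k : ℝ) + 1) / β) atTop atTop :=
    (tendsto_atTop_add_const_right _ 1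
      (tendsto_natCast_atTop_atTop.const_mul_atTop two_pos)).atTop_div_const hβ
  have hratio : Tendsto (fun k => a k / a (k + 1)) atTop (𝓝 0) := by
    refine ((Real.tendsto_Gamma_div_Gamma_add_atTop (by positivity : 0 < 2 / β)).comp hx).congr
      fun k => ?_
    simp only [a, Function.comp_apply, Nat.cast_add_one]
    ring_nf
  have hlast : ∀ m : ℕ, Real.Gamma ((2 * ((m : ℝ) + 1) - 1) / β) = a m := fun m => by
    simp only [a]; ring_nf
  rw [← tendsto_add_atTop_iff_nat 1]
  simpa [hlast, sum_range_succ, add_div, div_self (ha _).ne'] using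
    (tendsto_sum_range_div_of_tendsto_div_succ ha hratio).add_const 1
end

section
/- Let β > 0 and let (P_j)_{j≥0} be polynomials with real coefficients such that deg P_j = j and ∫_0^∞ P_i(x) P_j(x) e^{−x^β} dx = δ_{ij} for all i, j (the orthonormal polynomials for the weight e^{−x^β} on [0,∞)). Then the smallest eigenvalue λ_1(N) of the Hankel matrix H_N satisfies λ_1(N) ≥ 2π / Σ_{j=0}^{N} K_{jj}, where K_{jj} = ∫_{−π}^{π} P_j(−e^{iφ}) P_j(−e^{−iφ}) dφ = ∫_{−π}^{π} |P_j(−e^{iφ})|² dφ. -/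
open MeasureTheory Set Real Polynomial ComplexConjugate
open scoped Matrix

/-! Read the eigenvector `v` as the coefficients of `Q = ∑ vᵢ Xⁱ`, and expand `Q = ∑_{j<N} cⱼ Pⱼ`
in the orthonormal basis. Then `λ₁ ‖v‖² = vᵀ H_N v = ∫₀^∞ Q² w = ∑ cⱼ²`. On the other hand,
Parseval on the circle gives `2π ‖v‖² = ∫_{-π}^{π} |Q(-e^{iφ})|² dφ`, and Cauchy–Schwarz applied
to `Q = ∑ cⱼ Pⱼ` bounds this by `(∑ cⱼ²) ∑_{j<N} K_jj = λ₁ ‖v‖² ∑_{j<N} K_jj`. -/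

theorem integrableOn_eval_mul_exp_neg_rpow {β : ℝ} (hβ : 0 < β) (p : ℝ[X]) :
    IntegrableOn (fun x => p.eval x * exp (-(x ^ β))) (Ioi 0) := by
  have hmono (i : ℕ) : IntegrableOn (fun x : ℝ => x ^ i * exp (-(x ^ β))) (Ioi 0) :=
    (integrableOn_rpow_mul_exp_neg_rpow (s := i) (by linarith [i.cast_nonneg (α := ℝ)])
      hβ).congr_fun (fun x _ => by simp only [rpow_natCast]) measurableSet_Ioi
  simp_rw [eval_eq_sum_range, Finset.sum_mul, mul_assoc]
  exact integrable_finsetSum _ fun i _ => (hmono i).const_mul _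

theorem integral_sq_sum_mul {α ι : Type*} [MeasurableSpace α] {μ : Measure α} (s : Finset ι)
    (c : ι → ℝ) (f : ι → α → ℝ) (w : α → ℝ)
    (hf : ∀ i ∈ s, ∀ j ∈ s, Integrable (fun x => f i x * f j x * w x) μ) :
    ∫ x, (∑ i ∈ s, c i * f i x) ^ 2 * w x ∂μ
      = ∑ i ∈ s, ∑ j ∈ s, c i * c j * ∫ x, f i x * f j x * w x ∂μ := by
  have hexpand (x : α) : (∑ i ∈ s, c i * f i x) ^ 2 * w x
      = ∑ i ∈ s, ∑ j ∈ s, c i * c j * (f i x * f j x * w x) := by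
    simp_rw [sq, Finset.sum_mul_sum, Finset.sum_mul]
    exact Finset.sum_congr rfl fun i _ => Finset.sum_congr rfl fun j _ => by ring
  simp_rw [hexpand]
  rw [integral_finsetSum _ fun i hi =>
    integrable_finsetSum _ fun j hj => (hf i hi j hj).const_mul _]
  refine Finset.sum_congr rfl fun i hi => ?_
  rw [integral_finsetSum _ fun j hj => (hf i hi j hj).const_mul _]
  simp_rw [integral_const_mul]

theorem integral_sq_sum_of_orthonormal {α ι : Type*} [MeasurableSpace α] [DecidableEq ι]
    {μ : Measure α} (s : Finset ι) (c : ι → ℝ) (f : ι → α → ℝ) (w : α → ℝ)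
    (hf : ∀ i ∈ s, ∀ j ∈ s, Integrable (fun x => f i x * f j x * w x) μ)
    (horth : ∀ i ∈ s, ∀ j ∈ s, ∫ x, f i x * f j x * w x ∂μ = if i = j then 1 else 0) :
    ∫ x, (∑ i ∈ s, c i * f i x) ^ 2 * w x ∂μ = ∑ i ∈ s, c i ^ 2 := by
  rw [integral_sq_sum_mul s c f w hf]
  refine Finset.sum_congr rfl fun i hi => ?_
  rw [Finset.sum_congr rfl fun j hj => congrArg (c i * c j * ·) (horth i hi j hj)]
  simp [sq, hi]

noncomputable def hankelMomentMatrix (β : ℝ) (N : ℕ) : Matrix (Fin N) (Fin N) ℝ :=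
  Matrix.of fun i j => ∫ x in Ioi (0 : ℝ), x ^ ((i : ℕ) + (j : ℕ)) * exp (-(x ^ β))

theorem dotProduct_hankelMomentMatrix_mulVec {β : ℝ} (hβ : 0 < β) {N : ℕ} (v : Fin N → ℝ) :
    v ⬝ᵥ (hankelMomentMatrix β N *ᵥ v)
      = ∫ x in Ioi (0 : ℝ), (∑ i, v i * x ^ (i : ℕ)) ^ 2 * exp (-(x ^ β)) := by
  have hint (i j : Fin N) :
      IntegrableOn (fun x => x ^ (i : ℕ) * x ^ (j : ℕ) * exp (-(x ^ β))) (Ioi 0) := by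
    simpa [← pow_add] using integrableOn_eval_mul_exp_neg_rpow hβ (X ^ ((i : ℕ) + j))
  rw [integral_sq_sum_mul _ v (fun i x => x ^ (i : ℕ)) _ fun i _ j _ => hint i j]
  simp only [dotProduct, Matrix.mulVec, hankelMomentMatrix, Matrix.of_apply, Finset.mul_sum,
    pow_add]
  exact Finset.sum_congr rfl fun i _ => Finset.sum_congr rfl fun j _ => by ring

theorem Polynomial.Sequence.exists_sum_smul_eq_of_degree_lt {K : Type*} [Field K]
    (S : Sequence K) {p : K[X]} {n : ℕ} (hp : p.degree < n) :
    ∃ c : ℕ → K, ∑ j ∈ Finset.range n, c j • S j = p := by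
  have hspan :=
    S.span_degreeLT (m := n) fun i _ => (leadingCoeff_ne_zero.mpr (S.ne_zero i)).isUnit
  have hmem : p ∈ Submodule.span K (S '' ↑(Finset.range n)) := by
    rw [Finset.coe_range, hspan]
    exact mem_degreeLT.mpr hp
  exact (Submodule.mem_span_image_finset_iff_exists_fun' K).mp hmem

theorem integral_cos_nat_sub_mul (m n : ℕ) :
    ∫ φ in (-π)..π, cos (((n : ℝ) - m) * φ) = if m = n then 2 * π else 0 := by
  split_ifs with hmn
  · simp [hmn]; ring
  · have hk : ((n : ℝ) - m) = ((n - m : ℤ) : ℝ) := by push_cast; rfl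
    have hk' : ((n : ℝ) - m) ≠ 0 := sub_ne_zero.mpr (Nat.cast_injective.ne (Ne.symm hmn))
    rw [intervalIntegral.integral_comp_mul_left (fun φ => cos φ) hk', integral_cos, mul_neg,
      sin_neg, hk, sin_int_mul_pi, neg_zero, sub_zero, smul_zero]

theorem normSq_sum_ofReal_mul {ι : Type*} (s : Finset ι) (a : ι → ℝ) (u : ι → ℂ) :
    Complex.normSq (∑ i ∈ s, (a i : ℂ) * u i)
      = ∑ i ∈ s, ∑ k ∈ s, a i * a k * (conj (u i) * u k).re := by
  rw [← Complex.ofReal_re (Complex.normSq _), Complex.normSq_eq_conj_mul_self, map_sum,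
    Finset.sum_mul_sum, Complex.re_sum]
  refine Finset.sum_congr rfl fun i _ => ?_
  rw [Complex.re_sum]
  refine Finset.sum_congr rfl fun k _ => ?_
  rw [map_mul, Complex.conj_ofReal, mul_mul_mul_comm, ← Complex.ofReal_mul, Complex.re_ofReal_mul]

theorem re_conj_neg_exp_pow_mul_pow (φ : ℝ) (m n : ℕ) :
    (conj ((-Complex.exp (φ * Complex.I)) ^ m) * (-Complex.exp (φ * Complex.I)) ^ n).re
      = (-1) ^ (m + n) * cos (((n : ℝ) - m) * φ) := by
  have h : conj ((-Complex.exp (φ * Complex.I)) ^ m) * (-Complex.exp (φ * Complex.I)) ^ n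
      = ((-1 : ℝ) ^ (m + n) : ℝ) * Complex.exp ((((n : ℝ) - m) * φ : ℝ) * Complex.I) := by
    rw [map_pow, map_neg, ← Complex.exp_conj, map_mul, Complex.conj_ofReal, Complex.conj_I,
      neg_pow (Complex.exp _), neg_pow (Complex.exp _), ← Complex.exp_nat_mul,
      ← Complex.exp_nat_mul, mul_mul_mul_comm, ← pow_add, ← Complex.exp_add]
    push_cast
    ring_nf
  rw [h, Complex.re_ofReal_mul, Complex.exp_ofReal_mul_I_re]

theorem integral_normSq_sum_mul_neg_exp_pow {ι : Type*} [Fintype ι] (a : ι → ℝ) {e : ι → ℕ}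
    (he : Function.Injective e) :
    ∫ φ in (-π)..π, Complex.normSq (∑ i, (a i : ℂ) * (-Complex.exp (φ * Complex.I)) ^ e i)
      = 2 * π * ∑ i, a i ^ 2 := by
  simp_rw [normSq_sum_ofReal_mul, re_conj_neg_exp_pow_mul_pow]
  have hterm (i k : ι) : IntervalIntegrable
      (fun φ => a i * a k * ((-1) ^ (e i + e k) * cos (((e k : ℝ) - e i) * φ))) volume (-π) π :=
    Continuous.intervalIntegrable (by fun_prop) _ _
  rw [intervalIntegral.integral_finsetSum fun i _ =>
    Continuous.intervalIntegrable (by fun_prop) _ _, Finset.mul_sum]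
  refine Finset.sum_congr rfl fun i _ => ?_
  rw [intervalIntegral.integral_finsetSum fun k _ => hterm i k]
  simp_rw [intervalIntegral.integral_const_mul, integral_cos_nat_sub_mul]
  rw [Finset.sum_eq_single_of_mem i (Finset.mem_univ i) fun k _ hk => by
    rw [if_neg (he.ne hk.symm), mul_zero, mul_zero], if_pos rfl, Even.neg_one_pow ⟨_, rfl⟩]
  ring

theorem norm_sum_smul_sq_le {ι E : Type*} [SeminormedAddCommGroup E] [NormedSpace ℝ E]
    (s : Finset ι) (c : ι → ℝ) (x : ι → E) :
    ‖∑ i ∈ s, c i • x i‖ ^ 2 ≤ (∑ i ∈ s, c i ^ 2) * ∑ i ∈ s, ‖x i‖ ^ 2 := by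
  calc ‖∑ i ∈ s, c i • x i‖ ^ 2 ≤ (∑ i ∈ s, |c i| * ‖x i‖) ^ 2 := by
        gcongr
        exact (norm_sum_le _ _).trans_eq (by simp_rw [norm_smul, Real.norm_eq_abs])
    _ ≤ (∑ i ∈ s, |c i| ^ 2) * ∑ i ∈ s, ‖x i‖ ^ 2 := Finset.sum_mul_sq_le_sq_mul_sq _ _ _
    _ = (∑ i ∈ s, c i ^ 2) * ∑ i ∈ s, ‖x i‖ ^ 2 := by simp_rw [sq_abs]

theorem integral_normSq_aeval_sum_smul_le {ι : Type*} (s : Finset ι) (c : ι → ℝ) (P : ι → ℝ[X])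
    {γ : ℝ → ℂ} (hγ : Continuous γ) {a b : ℝ} (hab : a ≤ b) :
    ∫ φ in a..b, Complex.normSq (aeval (γ φ) (∑ j ∈ s, c j • P j))
      ≤ (∑ j ∈ s, c j ^ 2) * ∑ j ∈ s, ∫ φ in a..b, Complex.normSq (aeval (γ φ) (P j)) := by
  have hcont (p : ℝ[X]) : Continuous fun φ => Complex.normSq (aeval (γ φ) p) :=
    Complex.continuous_normSq.comp (p.continuous_aeval.comp hγ)
  rw [← intervalIntegral.integral_finsetSum fun j _ => (hcont (P j)).intervalIntegrable _ _,
    ← intervalIntegral.integral_const_mul]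
  refine intervalIntegral.integral_mono_on hab ((hcont _).intervalIntegrable _ _)
    ((continuous_const.mul (continuous_finsetSum _ fun j _ => hcont (P j))).intervalIntegrable _ _)
    fun φ _ => ?_
  simpa only [map_sum, map_smul, Complex.normSq_eq_norm_sq] using
    norm_sum_smul_sq_le s c fun j => aeval (γ φ) (P j)

theorem sum_sq_eq_dotProduct_hankelMomentMatrix_mulVec {β : ℝ} (hβ : 0 < β) {P : ℕ → ℝ[X]}
    (horth : ∀ i j : ℕ,
      ∫ x in Ioi (0 : ℝ), (P i).eval x * (P j).eval x * exp (-(x ^ β)) = if i = j then 1 else 0)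
    {N : ℕ} {v : Fin N → ℝ} {c : ℕ → ℝ}
    (hc : ∑ j ∈ Finset.range N, c j • P j = ∑ i : Fin N, C (v i) * X ^ (i : ℕ)) :
    ∑ j ∈ Finset.range N, c j ^ 2 = v ⬝ᵥ (hankelMomentMatrix β N *ᵥ v) := by
  have heval (x : ℝ) :
      ∑ j ∈ Finset.range N, c j * (P j).eval x = ∑ i, v i * x ^ (i : ℕ) := by
    simpa [eval_finsetSum] using congrArg (eval x) hc
  have hint (i j : ℕ) :
      IntegrableOn (fun x => (P i).eval x * (P j).eval x * exp (-(x ^ β))) (Ioi 0) := by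
    simpa using integrableOn_eval_mul_exp_neg_rpow hβ (P i * P j)
  rw [dotProduct_hankelMomentMatrix_mulVec hβ, ← integral_sq_sum_of_orthonormal (Finset.range N) c
    (fun j x => (P j).eval x) _ (fun i _ j _ => (hint i j).integrable) fun i _ j _ => horth i j]
  simp_rw [heval]

theorem two_pi_mul_sum_sq_le_of_sum_smul_eq {P : ℕ → ℝ[X]} {N : ℕ} {v : Fin N → ℝ} {c : ℕ → ℝ}
    (hc : ∑ j ∈ Finset.range N, c j • P j = ∑ i : Fin N, C (v i) * X ^ (i : ℕ)) :
    2 * π * ∑ i, v i ^ 2 ≤ (∑ j ∈ Finset.range N, c j ^ 2) *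
      ∑ j ∈ Finset.range N,
        ∫ φ in (-π)..π, Complex.normSq (aeval (-Complex.exp (φ * Complex.I)) (P j)) := by
  have haeval (z : ℂ) :
      aeval z (∑ j ∈ Finset.range N, c j • P j) = ∑ i, (v i : ℂ) * z ^ (i : ℕ) := by
    simp [hc]
  rw [← integral_normSq_sum_mul_neg_exp_pow v Fin.val_injective]
  simp_rw [← haeval]
  exact integral_normSq_aeval_sum_smul_le _ c P (by fun_prop) (by linarith [pi_pos])

theorem smallest_eigenvalue_lower_bound_general (β : ℝ) (hβ : 0 < β) (P : ℕ → Polynomial ℝ)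
    (hdeg : ∀ j : ℕ, (P j).degree = j)
    (horth : ∀ i j : ℕ,
      (∫ x in Ioi (0 : ℝ), (P i).eval x * (P j).eval x * Real.exp (-(x ^ β)))
        = if i = j then 1 else 0)
    (N : ℕ)
    (lam1 : ℝ)
    (h_eig : ∃ v : Fin N → ℝ, v ≠ 0 ∧
      (Matrix.of fun i j : Fin N =>
          ∫ x in Ioi (0 : ℝ), x ^ ((i : ℕ) + (j : ℕ)) * Real.exp (-(x ^ β))).mulVec v
        = lam1 • v) :
    lam1 ≥ 2 * Real.pi /
      ∑ j ∈ Finset.range (N + 1),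
        ∫ φ in (-Real.pi)..Real.pi,
          Complex.normSq (Polynomial.aeval (-Complex.exp (φ * Complex.I)) (P j)) := by
  obtain ⟨v, hv0, hv⟩ := h_eig
  set K : ℕ → ℝ := fun j =>
    ∫ φ in (-π)..π, Complex.normSq (aeval (-Complex.exp (φ * Complex.I)) (P j))
  obtain ⟨c, hc⟩ := Sequence.exists_sum_smul_eq_of_degree_lt ⟨P, hdeg⟩ (degree_sum_fin_lt v)
  have hv_pos : 0 < ∑ i, v i ^ 2 := by
    obtain ⟨i, hi⟩ := Function.ne_iff.mp hv0
    exact Finset.sum_pos' (fun i _ => sq_nonneg _) ⟨i, Finset.mem_univ i, sq_pos_of_ne_zero hi⟩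
  have hcoeff : ∑ j ∈ Finset.range N, c j ^ 2 = lam1 * ∑ i, v i ^ 2 := by
    rw [sum_sq_eq_dotProduct_hankelMomentMatrix_mulVec hβ horth hc, hankelMomentMatrix, hv]
    simp [dotProduct, sq, Finset.mul_sum, mul_left_comm]
  have hlam_nonneg : 0 ≤ lam1 :=
    nonneg_of_mul_nonneg_left (hcoeff ▸ Finset.sum_nonneg fun j _ => sq_nonneg (c j)) hv_pos
  have hK_le : ∑ j ∈ Finset.range N, K j ≤ ∑ j ∈ Finset.range (N + 1), K j :=
    Finset.sum_le_sum_of_subset_of_nonneg (Finset.range_subset_range.mpr N.le_succ) fun j _ _ =>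
      intervalIntegral.integral_nonneg (by linarith [pi_pos]) fun _ _ => Complex.normSq_nonneg _
  have h2pi : 2 * π ≤ lam1 * ∑ j ∈ Finset.range (N + 1), K j := by
    refine le_of_mul_le_mul_right ?_ hv_pos
    calc 2 * π * ∑ i, v i ^ 2
        ≤ lam1 * (∑ i, v i ^ 2) * ∑ j ∈ Finset.range N, K j :=
          hcoeff ▸ two_pi_mul_sum_sq_le_of_sum_smul_eq hc
      _ ≤ lam1 * (∑ i, v i ^ 2) * ∑ j ∈ Finset.range (N + 1), K j := by gcongr
      _ = lam1 * (∑ j ∈ Finset.range (N + 1), K j) * ∑ i, v i ^ 2 := by ring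
  rw [ge_iff_le, div_le_iff₀ (pos_of_mul_pos_right (h2pi.trans_lt' (by positivity)) hlam_nonneg)]
  exact h2pi

/-- Let β > 0 and let (P_j) be the orthonormal polynomials for the weight
e^{−x^β} on [0,∞), with deg P_j = j. Then the smallest eigenvalue λ_1(N) of
the Hankel matrix H_N = (μ_{i+j})_{i,j=0}^{N−1} satisfies
λ_1(N) ≥ 2π / Σ_{j=0}^{N} K_{jj}, where
K_{jj} = ∫_{−π}^{π} |P_j(−e^{iφ})|² dφ. -/
theorem smallest_eigenvalue_lower_bound (β : ℝ) (hβ : 0 < β) (P : ℕ → Polynomial ℝ)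
    (hdeg : ∀ j : ℕ, (P j).degree = j)
    (horth : ∀ i j : ℕ,
      (∫ x in Ioi (0 : ℝ), (P i).eval x * (P j).eval x * Real.exp (-(x ^ β)))
        = if i = j then 1 else 0)
    (N : ℕ) (hN : 1 ≤ N)
    (lam1 : ℝ)
    (h_eig : ∃ v : Fin N → ℝ, v ≠ 0 ∧
      (Matrix.of fun i j : Fin N =>
          ∫ x in Ioi (0 : ℝ), x ^ ((i : ℕ) + (j : ℕ)) * Real.exp (-(x ^ β))).mulVec v
        = lam1 • v)
    (h_min : ∀ (μ : ℝ) (v : Fin N → ℝ), v ≠ 0 →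
      (Matrix.of fun i j : Fin N =>
          ∫ x in Ioi (0 : ℝ), x ^ ((i : ℕ) + (j : ℕ)) * Real.exp (-(x ^ β))).mulVec v
        = μ • v → lam1 ≤ μ) :
    lam1 ≥ 2 * Real.pi /
      ∑ j ∈ Finset.range (N + 1),
        ∫ φ in (-Real.pi)..Real.pi,
          Complex.normSq (Polynomial.aeval (-Complex.exp (φ * Complex.I)) (P j)) :=
  smallest_eigenvalue_lower_bound_general β hβ P hdeg horth N lam1 h_eig
end

section
/- With f_2(N) = (1/(12π²))·[ −3π(2 + π − 2 log(4π)) + (log N)² + 3π log(N+1) + (3π − 2 log(N+1)) log N + (log(N+1))² ] and f_4(N) = (1/(240π⁴))·[ −30π³(π − 3 + log(4π)) + 2(log N)⁴ − 15π³ log(N+1) − 8(log N)³ log(N+1) − 20π² (log(N+1))² + 2(log(N+1))⁴ − 4(log N)²(5π² − 3(log(N+1))²) + (−15π³ + 40π² log(N+1) − 8(log(N+1))³) log N ], one has lim_{N→∞} (log N) · f_4(N) / f_2(N)² = −π/2; in particular f_4(N)/f_2(N)² = O(1/log N), so the quartic term is a small perturbation of the Gaussian saddle point integral for large N. -/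
open Filter Real Asymptotics

/-- The second Taylor coefficient at φ = 0 in the Laplace evaluation of
Σ_{j=0}^{N} K_{jj} for the weight e^{−√x}. -/
noncomputable def f₂ (N : ℕ) : ℝ :=
  (1 / (12 * π ^ 2)) *
    (-3 * π * (2 + π - 2 * Real.log (4 * π)) + (Real.log N) ^ 2
      + 3 * π * Real.log (N + 1)
      + (3 * π - 2 * Real.log (N + 1)) * Real.log N
      + (Real.log (N + 1)) ^ 2)

/-- The fourth Taylor coefficient at φ = 0 in the Laplace evaluation of
Σ_{j=0}^{N} K_{jj} for the weight e^{−√x}. -/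
noncomputable def f₄ (N : ℕ) : ℝ :=
  (1 / (240 * π ^ 4)) *
    (-30 * π ^ 3 * (π - 3 + Real.log (4 * π))
      + 2 * (Real.log N) ^ 4
      - 15 * π ^ 3 * Real.log (N + 1)
      - 8 * (Real.log N) ^ 3 * Real.log (N + 1)
      - 20 * π ^ 2 * (Real.log (N + 1)) ^ 2
      + 2 * (Real.log (N + 1)) ^ 4
      - 4 * (Real.log N) ^ 2 * (5 * π ^ 2 - 3 * (Real.log (N + 1)) ^ 2)
      + (-15 * π ^ 3 + 40 * π ^ 2 * Real.log (N + 1) - 8 * (Real.log (N + 1)) ^ 3)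
          * Real.log N)

/-!
Write `L = log N` and `d = log (N + 1) - log N`, which tends to `0`. In these variables all
powers of `L` above the first cancel: `f₂ = L / (2π) + p₂(d)` and `f₄ = -L / (8π) + p₄(d)`
with polynomials `p₂, p₄`. Hence `f₂ / L → 1 / (2π)`, `f₄ / L → -1 / (8π)`, and
`L f₄ / f₂² = (f₄ / L) / (f₂ / L)² → -π / 2`.
-/

lemma tendsto_mul_add_div_self {α : Type*} {l : Filter α} {L b : α → ℝ} {β : ℝ} (c : ℝ)
    (hL : Tendsto L l atTop) (hb : Tendsto b l (nhds β)) :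
    Tendsto (fun n => (c * L n + b n) / L n) l (nhds c) := by
  have h : Tendsto (fun n => c + b n / L n) l (nhds (c + 0)) :=
    tendsto_const_nhds.add (hb.div_atTop hL)
  rw [add_zero] at h
  refine h.congr' ?_
  filter_upwards [hL.eventually_ne_atTop 0] with n hn
  field_simp

lemma tendsto_div_log_of_eq_mul_log_add {f : ℕ → ℝ} {g : ℝ → ℝ} (c : ℝ)
    (hg : ContinuousAt g 0) (hf : ∀ N, f N = c * Real.log N + g (Real.log (N + 1) - Real.log N)) :
    Tendsto (fun N => f N / Real.log N) atTop (nhds c) := by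
  simp only [hf]
  exact tendsto_mul_add_div_self c (tendsto_log_atTop.comp tendsto_natCast_atTop_atTop)
    (hg.tendsto.comp tendsto_log_nat_add_one_sub_log)

lemma tendsto_f₂_div_log : Tendsto (fun N => f₂ N / Real.log N) atTop (nhds (2 * π)⁻¹) :=
  tendsto_div_log_of_eq_mul_log_add _
    (g := fun d => (d ^ 2 + 3 * π * d - 3 * π * (2 + π - 2 * Real.log (4 * π))) / (12 * π ^ 2))
    (by fun_prop) fun N => by
      unfold f₂
      field_simp
      ring

lemma tendsto_f₄_div_log : Tendsto (fun N => f₄ N / Real.log N) atTop (nhds (-(8 * π)⁻¹)) :=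
  tendsto_div_log_of_eq_mul_log_add _
    (g := fun d => (2 * d ^ 4 - 20 * π ^ 2 * d ^ 2 - 15 * π ^ 3 * d
      - 30 * π ^ 3 * (π - 3 + Real.log (4 * π))) / (240 * π ^ 4))
    (by fun_prop) fun N => by
      unfold f₄
      field_simp
      ring

/-- lim_{N→∞} (log N) · f₄(N) / f₂(N)² = −π/2; in particular
f₄(N)/f₂(N)² = O(1/log N). -/
theorem f₄_div_f₂_sq_asymptotics :
    Tendsto (fun N : ℕ => Real.log N * f₄ N / (f₂ N) ^ 2) atTop (nhds (-π / 2)) ∧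
    (fun N : ℕ => f₄ N / (f₂ N) ^ 2) =O[atTop] (fun N : ℕ => 1 / Real.log N) := by
  have hlog : ∀ᶠ N : ℕ in atTop, Real.log N ≠ 0 :=
    (tendsto_log_atTop.comp tendsto_natCast_atTop_atTop).eventually_ne_atTop 0
  have hlim : Tendsto (fun N : ℕ => Real.log N * f₄ N / (f₂ N) ^ 2) atTop (nhds (-π / 2)) := by
    have h := tendsto_f₄_div_log.div (tendsto_f₂_div_log.pow 2) (by positivity)
    convert h.congr' ?_ using 2
    · field_simp
      ring
    · filter_upwards [hlog] with N hN
      rw [Pi.div_apply, div_pow, div_div_eq_mul_div]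
      congr 1
      field_simp
  refine ⟨hlim, isBigO_of_div_tendsto_nhds ?_ _ (hlim.congr fun N => ?_)⟩
  · filter_upwards [hlog] with N hN h
    exact absurd h (one_div_ne_zero hN)
  · simp only [Pi.div_apply, one_div, div_inv_eq_mul]
    ring
end
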